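/- arXiv:math/9809060 — 2 statements merged into one kernel-verified Lean document; each statement's English description precedes it below -/
import Mathlib

section
/- If φ : ℝ^n → ℤ is a sum of signs, then the function x ↦ (φ(x)^4 − φ(x)^2)/2 takes integer values and is itself a sum of signs. -/
/-- The integer-valued sign of a real number. -/
noncomputable def sgn (r : ℝ) : ℤ := if r < 0 then -1 else if 0 < r then 1 else 0

/-- A function `φ : ℝ^n → ℤ` is a sum of signs if it is a finite sum of signs of
polynomials. -/
def IsSumOfSigns {n : ℕ} (φ : (Fin n → ℝ) → ℤ) : Prop :=
  ∃ (s : ℕ) (g : Fin s → MvPolynomial (Fin n) ℝ),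
    ∀ x, φ x = ∑ i : Fin s, sgn (MvPolynomial.eval x (g i))

/-!
Sums of signs form a subring of `(ℝ^n → ℤ)`, since `sgn a * sgn b = sgn (a * b)` and
`-sgn a = sgn (-a)`. Each summand `c = sgn g` of `φ` satisfies `c ^ 3 = c`, and for such `c`
`(x + c)^4 - (x + c)^2 = x^4 - x^2 + 2 (2x³c + 3x²c² + xc)`,
so adding the summands one at a time keeps `(φ^4 - φ^2) / 2` in that subring.
-/

theorem sgn_eq_sign (r : ℝ) : sgn r = SignType.sign r := by
  unfold sgn
  rcases lt_trichotomy r 0 with hr | rfl | hr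
  · simp [hr, sign_neg hr]
  · simp
  · simp [hr, hr.not_gt, sign_pos hr]

theorem sgn_mul (a b : ℝ) : sgn (a * b) = sgn a * sgn b := by
  simp [sgn_eq_sign, sign_mul]

theorem sgn_neg (a : ℝ) : sgn (-a) = -sgn a := by
  simp [sgn_eq_sign, Left.sign_neg]

theorem sgn_one : sgn 1 = 1 := by
  simp [sgn_eq_sign]

theorem sgn_pow_three (a : ℝ) : sgn a ^ 3 = sgn a := by
  rw [sgn_eq_sign]
  cases SignType.sign a <;> rfl

theorem add_pow_four_sub_add_sq_of_pow_three_eq_self {R : Type*} [CommRing R] {a : R} (ha : a ^ 3 = a) (x : R) :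
    (x + a) ^ 4 - (x + a) ^ 2 = x ^ 4 - x ^ 2 + 2 * (2 * x ^ 3 * a + 3 * x ^ 2 * a ^ 2 + x * a) := by
  linear_combination (4 * x + a) * ha

theorem Subring.exists_two_mul_eq_pow_four_sub_sq {R ι : Type*} [CommRing R] (S : Subring R)
    (s : Finset ι) (c : ι → R) (hcS : ∀ i ∈ s, c i ∈ S) (hc : ∀ i ∈ s, c i ^ 3 = c i) :
    ∃ ψ ∈ S, 2 * ψ = (∑ i ∈ s, c i) ^ 4 - (∑ i ∈ s, c i) ^ 2 := by
  classical
  induction s using Finset.induction_on with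
  | empty => exact ⟨0, S.zero_mem, by simp⟩
  | insert j s hj ih =>
    obtain ⟨ψ, hψS, hψ⟩ := ih (fun i hi => hcS i (Finset.mem_insert_of_mem hi))
      (fun i hi => hc i (Finset.mem_insert_of_mem hi))
    set x := ∑ i ∈ s, c i
    have hx : x ∈ S := S.sum_mem fun i hi => hcS i (Finset.mem_insert_of_mem hi)
    have ha : c j ∈ S := hcS j (Finset.mem_insert_self j s)
    refine ⟨ψ + (2 * x ^ 3 * c j + 3 * x ^ 2 * c j ^ 2 + x * c j), ?_, ?_⟩
    · have h2 : (2 : R) ∈ S := natCast_mem S 2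
      have h3 : (3 : R) ∈ S := natCast_mem S 3
      aesop
    · rw [Finset.sum_insert hj, add_comm (c j),
        add_pow_four_sub_add_sq_of_pow_three_eq_self (hc j (Finset.mem_insert_self j s)), ← hψ]
      ring

namespace IsSumOfSigns

variable {n : ℕ}

theorem of_fintype {ι : Type*} [Fintype ι] (g : ι → MvPolynomial (Fin n) ℝ) :
    IsSumOfSigns fun x => ∑ i, sgn (MvPolynomial.eval x (g i)) := by
  let e := Fintype.equivFin ι
  exact ⟨Fintype.card ι, g ∘ e.symm, fun x => (e.symm.sum_comp _).symm⟩

theorem sgn_eval (g : MvPolynomial (Fin n) ℝ) :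
    IsSumOfSigns fun x => sgn (MvPolynomial.eval x g) :=
  ⟨1, fun _ => g, fun x => by simp⟩

theorem add {φ ψ : (Fin n → ℝ) → ℤ} (hφ : IsSumOfSigns φ) (hψ : IsSumOfSigns ψ) :
    IsSumOfSigns (φ + ψ) := by
  obtain ⟨s, g, hg⟩ := hφ
  obtain ⟨t, h, hh⟩ := hψ
  convert of_fintype (Sum.elim g h) using 2 with x
  simp [hg, hh, Fintype.sum_sum_type]

theorem mul {φ ψ : (Fin n → ℝ) → ℤ} (hφ : IsSumOfSigns φ) (hψ : IsSumOfSigns ψ) :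
    IsSumOfSigns (φ * ψ) := by
  obtain ⟨s, g, hg⟩ := hφ
  obtain ⟨t, h, hh⟩ := hψ
  convert of_fintype (fun p : Fin s × Fin t => g p.1 * h p.2) using 2 with x
  simp [hg, hh, Finset.sum_mul_sum, Fintype.sum_prod_type, sgn_mul]

theorem neg {φ : (Fin n → ℝ) → ℤ} (hφ : IsSumOfSigns φ) : IsSumOfSigns (-φ) := by
  obtain ⟨s, g, hg⟩ := hφ
  exact ⟨s, fun i => -g i, fun x => by simp [hg, sgn_neg]⟩

theorem zero : IsSumOfSigns (0 : (Fin n → ℝ) → ℤ) :=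
  ⟨0, Fin.elim0, fun _ => rfl⟩

theorem one : IsSumOfSigns (1 : (Fin n → ℝ) → ℤ) :=
  ⟨1, fun _ => 1, fun _ => by simp [sgn_one]⟩

end IsSumOfSigns

def sumsOfSigns (n : ℕ) : Subring ((Fin n → ℝ) → ℤ) where
  carrier := {φ | IsSumOfSigns φ}
  add_mem' := IsSumOfSigns.add
  mul_mem' := IsSumOfSigns.mul
  neg_mem' := IsSumOfSigns.neg
  zero_mem' := IsSumOfSigns.zero
  one_mem' := IsSumOfSigns.one

theorem half_pow4_sub_pow2_isSumOfSigns {n : ℕ} (φ : (Fin n → ℝ) → ℤ)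
    (hφ : IsSumOfSigns φ) :
    ∃ ψ : (Fin n → ℝ) → ℤ, IsSumOfSigns ψ ∧ ∀ x, 2 * ψ x = (φ x) ^ 4 - (φ x) ^ 2 := by
  obtain ⟨s, g, hg⟩ := hφ
  let c : Fin s → (Fin n → ℝ) → ℤ := fun i x => sgn (MvPolynomial.eval x (g i))
  have hφc : φ = ∑ i, c i := funext fun x => by simp [hg, c]
  obtain ⟨ψ, hψ, h2ψ⟩ := (sumsOfSigns n).exists_two_mul_eq_pow_four_sub_sq Finset.univ c
    (fun i _ => IsSumOfSigns.sgn_eval (g i)) (fun i _ => funext fun x => sgn_pow_three _)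
  exact ⟨ψ, hψ, fun x => by simpa [hφc] using congrFun h2ψ x⟩
end

section
/- Let P ∈ ℚ[t]. Then P preserves formal sums of signs if and only if the following three conditions hold: P takes integer values on all integers, ΔP preserves formal sums of signs, and ½Δ₂P preserves formal sums of signs. -/
open Polynomial

/-- A polynomial `P ∈ ℚ[t]` preserves formal sums of signs if for every `s ≥ 0` there is
a polynomial `Q` with integer coefficients in `s` variables such that
`P(X_1 + ⋯ + X_s) − Q` lies in the ideal generated by the `X_i^3 − X_i`. -/
def PreservesSumsOfSigns (P : Polynomial ℚ) : Prop :=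
  ∀ s : ℕ, ∃ Q : MvPolynomial (Fin s) ℤ,
    Polynomial.aeval (∑ i : Fin s, MvPolynomial.X i) P
        - MvPolynomial.map (Int.castRingHom ℚ) Q ∈
      Ideal.span (Set.range fun i : Fin s => MvPolynomial.X i ^ 3 - MvPolynomial.X i)

/-- The difference operator `ΔP(t) = P(t+1) − P(t)`. -/
noncomputable def deltaOp (P : Polynomial ℚ) : Polynomial ℚ :=
  P.comp (Polynomial.X + 1) - P

/-- The symmetric difference operator `Δ₂P(t) = P(t+1) − P(t−1)`. -/
noncomputable def delta2Op (P : Polynomial ℚ) : Polynomial ℚ :=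
  P.comp (Polynomial.X + 1) - P.comp (Polynomial.X - 1)

/-!
Modulo `x³ - x`, interpolation at the three sign values `0, 1, -1` gives
`P(a + x) ≡ P(a) + ½Δ₂P(a)·x + (ΔP - ½Δ₂P)(a)·x²`. Hence if `P(S)`, `ΔP(S)` and `½Δ₂P(S)` are
congruent to integer polynomials for `S = X₁ + ⋯ + Xₛ`, so is `P(X₀ + S)`, and induction on `s`
starting from `P(0) ∈ ℤ` proves one direction. Conversely, specializing `X₀` to `±1` in an integer
representative of `P(X₀ + S)` gives integer representatives of `P(S ± 1)` whose difference is even,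
and specializing all `|m|` variables to the sign of `m` shows `P(m) ∈ ℤ`.
-/

local notation "toℚ" => MvPolynomial.map (Int.castRingHom ℚ)

theorem aeval_deltaOp {A : Type*} [CommRing A] [Algebra ℚ A] (P : ℚ[X]) (a : A) :
    aeval a (deltaOp P) = aeval (a + 1) P - aeval a P := by
  simp [deltaOp, aeval_comp]

theorem aeval_delta2Op {A : Type*} [CommRing A] [Algebra ℚ A] (P : ℚ[X]) (a : A) :
    aeval a (delta2Op P) = aeval (a + 1) P - aeval (a - 1) P := by
  simp [delta2Op, aeval_comp]

theorem pow_three_sub_self_dvd_aeval_add_sub {A : Type*} [CommRing A] [Algebra ℚ A]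
    (P : ℚ[X]) (a x : A) :
    x ^ 3 - x ∣ aeval (a + x) P - (aeval a P + aeval a ((1 / 2 : ℚ) • delta2Op P) * x
      + (aeval a (deltaOp P) - aeval a ((1 / 2 : ℚ) • delta2Op P)) * x ^ 2) := by
  set B := (1 / 2 : ℚ) • delta2Op P
  set F : A[X] := aeval (C a + X) P
    - (C (aeval a P) + C (aeval a B) * X + C (aeval a (deltaOp P) - aeval a B) * X ^ 2)
  have hF (r : A) : F.eval r = aeval (a + r) P
      - (aeval a P + aeval a B * r + (aeval a (deltaOp P) - aeval a B) * r ^ 2) := by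
    have : (aeval (a + r) P) = ((aeval r).restrictScalars ℚ) (aeval (C a + X) P) := by
      rw [← aeval_algHom_apply]; simp
    simp [F, this]
  have hB : aeval a B * 2 = aeval (a + 1) P - aeval (a - 1) P := by
    rw [map_smul, aeval_delta2Op, smul_mul_assoc, mul_two, smul_add, ← add_smul]
    norm_num
  have h0 : F.IsRoot 0 := by simp [hF]
  have h1 : F.IsRoot 1 := by simp only [IsRoot, hF, aeval_deltaOp]; ring
  have hm1 : F.IsRoot (-1) := by
    simp only [IsRoot, hF, aeval_deltaOp, ← sub_eq_add_neg]
    linear_combination hB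
  have hcube : (X ^ 3 - X : A[X]) = (X - C 0) * (X - C 1) * (X - C (-1)) := by
    simp only [map_zero, map_one, map_neg]; ring
  have hdvd : (X ^ 3 - X : A[X]) ∣ F := by
    rw [hcube]
    refine IsCoprime.mul_dvd (IsCoprime.mul_left (isCoprime_X_sub_C_of_isUnit_sub ?_)
        (isCoprime_X_sub_C_of_isUnit_sub ?_))
      (IsCoprime.mul_dvd (isCoprime_X_sub_C_of_isUnit_sub ?_) (dvd_iff_isRoot.2 h0)
        (dvd_iff_isRoot.2 h1))
      (dvd_iff_isRoot.2 hm1)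
    · simp
    · norm_num
      simpa only [map_ofNat] using (IsUnit.mk0 (2 : ℚ) two_ne_zero).map (algebraMap ℚ A)
    · simp
  simpa [hF] using eval_dvd (x := x) hdvd

section SignIdeal

open MvPolynomial

variable {σ τ : Type*}

noncomputable def signIdeal (σ : Type*) : Ideal (MvPolynomial σ ℚ) :=
  Ideal.span (Set.range fun i => (X i ^ 3 - X i : MvPolynomial σ ℚ))

/-- Rational polynomials congruent modulo `signIdeal` to one with integer coefficients. -/
noncomputable def integralModSigns (σ : Type*) : Subring (MvPolynomial σ ℚ) :=
  ((toℚ).range.map (Ideal.Quotient.mk (signIdeal σ))).comap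
    (Ideal.Quotient.mk (signIdeal σ))

theorem mem_integralModSigns {f : MvPolynomial σ ℚ} :
    f ∈ integralModSigns σ ↔ ∃ Q : MvPolynomial σ ℤ, f - toℚ Q ∈ signIdeal σ := by
  simp only [integralModSigns, Subring.mem_comap, Subring.mem_map, RingHom.mem_range,
    exists_exists_eq_and, Ideal.Quotient.eq]
  exact exists_congr fun _ => sub_mem_comm_iff

theorem preservesSumsOfSigns_iff_forall_mem (P : ℚ[X]) :
    PreservesSumsOfSigns P ↔
      ∀ s, aeval (∑ i : Fin s, X i : MvPolynomial (Fin s) ℚ) P ∈ integralModSigns (Fin s) :=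
  forall_congr' fun _ => mem_integralModSigns.symm

theorem mem_integralModSigns_of_mem_signIdeal {f : MvPolynomial σ ℚ} (hf : f ∈ signIdeal σ) :
    f ∈ integralModSigns σ :=
  mem_integralModSigns.2 ⟨0, by simpa using hf⟩

theorem X_mem_integralModSigns (i : σ) : X i ∈ integralModSigns σ :=
  mem_integralModSigns.2 ⟨X i, by simp⟩

theorem X_pow_three_sub_X_mem_signIdeal (i : σ) :
    (X i ^ 3 - X i : MvPolynomial σ ℚ) ∈ signIdeal σ :=
  Ideal.subset_span ⟨i, rfl⟩

theorem aeval_mem_signIdeal {x : σ → MvPolynomial τ ℚ} (hx : ∀ i, x i ^ 3 - x i ∈ signIdeal τ)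
    {f : MvPolynomial σ ℚ} (hf : f ∈ signIdeal σ) : MvPolynomial.aeval x f ∈ signIdeal τ :=
  (Ideal.span_le (I := (signIdeal τ).comap (MvPolynomial.aeval x)).2
    (by rintro _ ⟨i, rfl⟩; simpa using hx i)) hf

theorem aeval_map_intCast (g : σ → MvPolynomial τ ℤ) (Q : MvPolynomial σ ℤ) :
    MvPolynomial.aeval (fun i => toℚ (g i)) (toℚ Q) = toℚ (MvPolynomial.aeval g Q) := by
  rw [← algebraMap_int_eq, MvPolynomial.aeval_map_algebraMap]
  exact (DFunLike.congr_fun (comp_aeval g (MvPolynomial.map (algebraMap ℤ ℚ)).toIntAlgHom) Q).symm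

theorem aeval_map_mem_integralModSigns {g : σ → MvPolynomial τ ℤ}
    (hg : ∀ i, toℚ (g i) ^ 3 - toℚ (g i) ∈ signIdeal τ)
    {f : MvPolynomial σ ℚ} (hf : f ∈ integralModSigns σ) :
    MvPolynomial.aeval (fun i => toℚ (g i)) f ∈ integralModSigns τ := by
  obtain ⟨Q, hQ⟩ := mem_integralModSigns.1 hf
  refine mem_integralModSigns.2 ⟨MvPolynomial.aeval g Q, ?_⟩
  rw [← aeval_map_intCast, ← map_sub]
  exact aeval_mem_signIdeal hg hQ

theorem exists_eq_C_of_mem_integralModSigns [IsEmpty σ] {f : MvPolynomial σ ℚ}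
    (hf : f ∈ integralModSigns σ) : ∃ k : ℤ, f = MvPolynomial.C (k : ℚ) := by
  obtain ⟨Q, hQ⟩ := mem_integralModSigns.1 hf
  have hbot : signIdeal σ = ⊥ := by simp [signIdeal]
  rw [hbot, Ideal.mem_bot, sub_eq_zero, eq_C_of_isEmpty Q] at hQ
  exact ⟨coeff 0 Q, by simp [hQ]⟩

end SignIdeal

section Specialization

open MvPolynomial

variable {s : ℕ}

theorem sub_dvd_aeval_cons_sub_aeval_cons {R : Type*} [CommRing R]
    (c d : MvPolynomial (Fin s) R) (Q : MvPolynomial (Fin (s + 1)) R) :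
    c - d ∣ aeval (Fin.cons c X) Q - aeval (Fin.cons d X) Q := by
  have h (c : MvPolynomial (Fin s) R) : aeval (Fin.cons c X) Q = (finSuccEquiv R s Q).eval c := by
    have : (aeval (Fin.cons c X) : MvPolynomial (Fin (s + 1)) R →ₐ[R] _) =
        ((Polynomial.aeval c).restrictScalars R).comp (finSuccEquiv R s).toAlgHom :=
      algHom_ext fun i => Fin.cases (by simp [finSuccEquiv_X_zero])
        (by simp [finSuccEquiv_X_succ]) i
    exact DFunLike.congr_fun this Q
  rw [h, h]
  exact sub_dvd_eval_sub _ _ _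

noncomputable def substFirst (s : ℕ) (ε : ℤ) : Fin (s + 1) → MvPolynomial (Fin s) ℤ :=
  Fin.cons (MvPolynomial.C ε) X

theorem map_substFirst_pow_three_sub_mem_signIdeal {ε : ℤ} (hε : ε ^ 3 = ε) (i : Fin (s + 1)) :
    toℚ (substFirst s ε i) ^ 3 - toℚ (substFirst s ε i) ∈ signIdeal (Fin s) := by
  induction i using Fin.cases with
  | zero =>
    have : (ε : MvPolynomial (Fin s) ℚ) ^ 3 - ε = 0 := by exact_mod_cast sub_eq_zero.2 hε
    simp [substFirst, this]
  | succ j => simpa [substFirst] using X_pow_three_sub_X_mem_signIdeal j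

theorem aeval_substFirst_aeval_sum_X (ε : ℤ) (P : ℚ[X]) :
    aeval (fun i => toℚ (substFirst s ε i))
        (Polynomial.aeval (∑ i : Fin (s + 1), X i : MvPolynomial (Fin (s + 1)) ℚ) P) =
      Polynomial.aeval (∑ i : Fin s, X i + (ε : MvPolynomial (Fin s) ℚ)) P := by
  rw [← Polynomial.aeval_algHom_apply]
  simp [substFirst, Fin.sum_univ_succ, add_comm]

theorem half_smul_sub_mem_integralModSigns {f : MvPolynomial (Fin (s + 1)) ℚ}
    (hf : f ∈ integralModSigns (Fin (s + 1))) :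
    (1 / 2 : ℚ) • (aeval (fun i => toℚ (substFirst s 1 i)) f
        - aeval (fun i => toℚ (substFirst s (-1) i)) f) ∈ integralModSigns (Fin s) := by
  obtain ⟨Q, hQ⟩ := mem_integralModSigns.1 hf
  obtain ⟨Q', hQ'⟩ := sub_dvd_aeval_cons_sub_aeval_cons (MvPolynomial.C 1) (MvPolynomial.C (-1)) Q
  refine mem_integralModSigns.2 ⟨Q', ?_⟩
  have hplus :=
    aeval_mem_signIdeal (map_substFirst_pow_three_sub_mem_signIdeal (ε := 1) (by norm_num)) hQ
  have hminus :=
    aeval_mem_signIdeal (map_substFirst_pow_three_sub_mem_signIdeal (ε := -1) (by norm_num)) hQ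
  rw [map_sub, aeval_map_intCast] at hplus hminus
  have hdiff : toℚ (aeval (substFirst s 1) Q) - toℚ (aeval (substFirst s (-1)) Q)
      = (2 : ℚ) • toℚ Q' := by
    rw [← map_sub, show aeval (substFirst s 1) Q - aeval (substFirst s (-1)) Q = _ from hQ']
    norm_num [two_smul, two_mul]
  convert Submodule.smul_of_tower_mem _ (1 / 2 : ℚ) (sub_mem hplus hminus) using 1
  linear_combination (norm := module) (1 / 2 : ℚ) • hdiff

end Specialization

section Characterization

open MvPolynomial

variable {P : ℚ[X]}

theorem PreservesSumsOfSigns.exists_eval_intCast_eq (hP : PreservesSumsOfSigns P) (m : ℤ) :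
    ∃ k : ℤ, P.eval (m : ℚ) = k := by
  rw [preservesSumsOfSigns_iff_forall_mem] at hP
  have hsign : ∀ _ : Fin m.natAbs, toℚ (MvPolynomial.C m.sign : MvPolynomial (Fin 0) ℤ) ^ 3
      - toℚ (MvPolynomial.C m.sign) ∈ signIdeal (Fin 0) := by
    intro _
    rcases Int.sign_trichotomy m with h | h | h <;> norm_num [h]
  obtain ⟨k, hk⟩ := exists_eq_C_of_mem_integralModSigns
    (aeval_map_mem_integralModSigns hsign (hP m.natAbs))
  refine ⟨k, MvPolynomial.C_injective (Fin 0) ℚ ?_⟩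
  have hsum : MvPolynomial.aeval (fun _ => toℚ (MvPolynomial.C m.sign))
      (∑ i : Fin m.natAbs, X i : MvPolynomial (Fin m.natAbs) ℚ) = (m : MvPolynomial (Fin 0) ℚ) := by
    simp only [map_sum, MvPolynomial.aeval_X, MvPolynomial.map_C, Finset.sum_const,
      Finset.card_univ, Fintype.card_fin, nsmul_eq_mul]
    rw [eq_intCast, map_intCast, ← Int.cast_natCast, ← Int.cast_mul, mul_comm, Int.sign_mul_natAbs]
  rw [← hk, ← Polynomial.aeval_algHom_apply, hsum,
    ← map_intCast (algebraMap ℚ (MvPolynomial (Fin 0) ℚ)),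
    Polynomial.aeval_algebraMap_apply, Polynomial.coe_aeval_eq_eval, MvPolynomial.algebraMap_eq]

theorem PreservesSumsOfSigns.deltaOp (hP : PreservesSumsOfSigns P) :
    PreservesSumsOfSigns (deltaOp P) := by
  rw [preservesSumsOfSigns_iff_forall_mem] at hP ⊢
  intro s
  have hshift := aeval_map_mem_integralModSigns
    (map_substFirst_pow_three_sub_mem_signIdeal (ε := 1) (by norm_num)) (hP (s + 1))
  rw [aeval_substFirst_aeval_sum_X, Int.cast_one] at hshift
  rw [aeval_deltaOp]
  exact sub_mem hshift (hP s)

theorem PreservesSumsOfSigns.half_delta2Op (hP : PreservesSumsOfSigns P) :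
    PreservesSumsOfSigns ((1 / 2 : ℚ) • delta2Op P) := by
  rw [preservesSumsOfSigns_iff_forall_mem] at hP ⊢
  intro s
  have h := half_smul_sub_mem_integralModSigns (hP (s + 1))
  rwa [aeval_substFirst_aeval_sum_X, aeval_substFirst_aeval_sum_X, Int.cast_one, Int.cast_neg,
    Int.cast_one, ← sub_eq_add_neg, ← aeval_delta2Op, ← map_smul] at h

theorem preservesSumsOfSigns_of_eval_zero (h0 : ∃ k : ℤ, P.eval 0 = k)
    (hΔ : PreservesSumsOfSigns (deltaOp P))
    (hB : PreservesSumsOfSigns ((1 / 2 : ℚ) • delta2Op P)) :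
    PreservesSumsOfSigns P := by
  rw [preservesSumsOfSigns_iff_forall_mem] at hΔ hB ⊢
  intro s
  induction s with
  | zero =>
    obtain ⟨k, hk⟩ := h0
    rw [Finset.univ_eq_empty, Finset.sum_empty,
      ← map_zero (algebraMap ℚ (MvPolynomial (Fin 0) ℚ)), Polynomial.aeval_algebraMap_apply,
      Polynomial.coe_aeval_eq_eval, hk, map_intCast]
    exact intCast_mem _ k
  | succ s ih =>
    set a : MvPolynomial (Fin (s + 1)) ℚ := ∑ i : Fin s, X i.succ
    have hshift {W : ℚ[X]}
        (hW : Polynomial.aeval (∑ i : Fin s, X i : MvPolynomial (Fin s) ℚ) W ∈ integralModSigns _) :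
        Polynomial.aeval a W ∈ integralModSigns (Fin (s + 1)) := by
      have := aeval_map_mem_integralModSigns
        (g := fun i : Fin s => (X i.succ : MvPolynomial (Fin (s + 1)) ℤ))
        (fun i => by simpa using X_pow_three_sub_X_mem_signIdeal i.succ) hW
      rw [← Polynomial.aeval_algHom_apply, map_sum] at this
      simpa using this
    have hrem := mem_integralModSigns_of_mem_signIdeal <| Ideal.mem_of_dvd _
      (pow_three_sub_self_dvd_aeval_add_sub P a (X 0)) (X_pow_three_sub_X_mem_signIdeal 0)
    have hX := X_mem_integralModSigns (σ := Fin (s + 1)) 0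
    have hquad := add_mem (add_mem (hshift ih) (mul_mem (hshift (hB s)) hX))
      (mul_mem (sub_mem (hshift (hΔ s)) (hshift (hB s))) (pow_mem hX 2))
    rw [Fin.sum_univ_succ, add_comm (X 0)]
    simpa using add_mem hrem hquad

end Characterization

theorem preservesSumsOfSigns_iff_delta2 (P : Polynomial ℚ) :
    PreservesSumsOfSigns P ↔
      ((∀ m : ℤ, ∃ k : ℤ, P.eval (m : ℚ) = (k : ℚ)) ∧
        PreservesSumsOfSigns (deltaOp P) ∧
        PreservesSumsOfSigns ((1 / 2 : ℚ) • delta2Op P)) :=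
  ⟨fun hP => ⟨hP.exists_eval_intCast_eq, hP.deltaOp, hP.half_delta2Op⟩,
    fun ⟨hint, hΔ, hB⟩ =>
      preservesSumsOfSigns_of_eval_zero (by simpa using hint 0) hΔ hB⟩
end
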